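/- arXiv:2202.04628 — 2 statements merged into one kernel-verified Lean document; each statement's English description precedes it below -/
import Mathlib

section
/- (Performance difference lemma for policy-dependent reward) Let π_b be a behavior policy of the fixed finite discounted MDP with π_b(s,a) > 0 for all (s,a). For any two policies π and π̃ with π(s,a) > 0 and π̃(s,a) > 0 for all (s,a), J_{C_π}(π) − J_{C_{π̃}}(π̃) = (1−γ)^{-1} ∑_s d^π(s) ∑_a π(s,a) A^{π̃}_{C_{π̃}}(s,a) + (1−γ)^{-1} D^π_KL(π, π̃). -/
open Finset

/-- Time-`t` state distribution of policy `π` in the MDP with transitions `P`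
and initial distribution `μ`. -/
noncomputable def pDist {S A : Type*} [Fintype S] [Fintype A]
    (P : S → A → S → ℝ) (μ : S → ℝ) (π : S → A → ℝ) : ℕ → S → ℝ
  | 0 => μ
  | t + 1 => fun s' => ∑ s, ∑ a, pDist P μ π t s * π s a * P s a s'

/-- Discounted state visitation distribution `d^π`. -/
noncomputable def dvisit {S A : Type*} [Fintype S] [Fintype A]
    (P : S → A → S → ℝ) (μ : S → ℝ) (γ : ℝ) (π : S → A → ℝ) (s : S) : ℝ :=
  (1 - γ) * ∑' t : ℕ, γ ^ t * pDist P μ π t s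

/-- Discounted return `J_R(π)`. -/
noncomputable def Jret {S A : Type*} [Fintype S] [Fintype A]
    (P : S → A → S → ℝ) (μ : S → ℝ) (γ : ℝ) (R : S → A → ℝ) (π : S → A → ℝ) : ℝ :=
  ∑' t : ℕ, γ ^ t * ∑ s, ∑ a, pDist P μ π t s * π s a * R s a

/-- Advantage function `A_R^π(s,a) = Q_R^π(s,a) - V_R^π(s)`, expressed in terms of
the value function `V` of the policy. -/
noncomputable def Adv {S A : Type*} [Fintype S]
    (P : S → A → S → ℝ) (γ : ℝ) (R : S → A → ℝ) (V : S → ℝ) (s : S) (a : A) : ℝ :=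
  (R s a + γ * ∑ s', P s a s' * V s') - V s

/-- KL divergence between two distributions on a finite type. -/
noncomputable def KL {X : Type*} [Fintype X] (p q : X → ℝ) : ℝ :=
  ∑ x, p x * Real.log (p x / q x)

/-- Total variation distance between two distributions on a finite type. -/
noncomputable def TV {X : Type*} [Fintype X] (p q : X → ℝ) : ℝ :=
  (1 / 2) * ∑ x, |p x - q x|

/-!
Split `J_{C_π}(π) - J_{C_{π̃}}(π̃)` as `(J_{C_π}(π) - J_{C_{π̃}}(π)) + (J_{C_{π̃}}(π) - J_{C_{π̃}}(π̃))`.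
The second difference is the classical performance difference lemma for the fixed reward
`C_{π̃}`: it follows from the Bellman flow equation
`d^ρ(s') = (1-γ) μ(s') + γ ∑_{s,a} d^ρ(s) ρ(s,a) P(s'|s,a)`, which turns the `γ P V - V` part of
the averaged advantage into `-(1-γ) ∑ μ V`, together with `J_{C_{π̃}}(π̃) = ∑ μ V^{π̃}`.
The first difference is the return of `π` for the reward `C_π - C_{π̃} = log (π / π̃)`,
whose `π`-average at each state is `D_KL(π(s,·), π̃(s,·))`.
-/

section DiscountedMDP

variable {S A : Type*} [Fintype S] [Fintype A] {P : S → A → S → ℝ} {μ : S → ℝ}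
  {ρ : S → A → ℝ} {γ : ℝ}

lemma pDist_mem_stdSimplex (hP : ∀ s a, P s a ∈ stdSimplex ℝ S) (hμ : μ ∈ stdSimplex ℝ S)
    (hρ : ∀ s, ρ s ∈ stdSimplex ℝ A) (t : ℕ) : pDist P μ ρ t ∈ stdSimplex ℝ S := by
  induction t with
  | zero => exact hμ
  | succ t ih =>
    refine ⟨fun s' => ?_, ?_⟩
    · exact sum_nonneg fun s _ => sum_nonneg fun a _ =>
        mul_nonneg (mul_nonneg (ih.1 s) ((hρ s).1 a)) ((hP s a).1 s')
    · have hmass : ∀ s, ∑ s', ∑ a, pDist P μ ρ t s * ρ s a * P s a s' = pDist P μ ρ t s :=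
        fun s => by
          rw [sum_comm]
          simp_rw [← mul_sum, (hP s _).2, mul_one, ← mul_sum, (hρ s).2, mul_one]
      simp only [pDist]
      rw [sum_comm]
      simp_rw [hmass]
      exact ih.2

lemma summable_pow_mul_pDist (hP : ∀ s a, P s a ∈ stdSimplex ℝ S) (hμ : μ ∈ stdSimplex ℝ S)
    (hρ : ∀ s, ρ s ∈ stdSimplex ℝ A) (hγ0 : 0 ≤ γ) (hγ1 : γ < 1) (s : S) :
    Summable fun t => γ ^ t * pDist P μ ρ t s := by
  have hp t := mem_Icc_of_mem_stdSimplex (pDist_mem_stdSimplex hP hμ hρ t) s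
  exact (summable_geometric_of_lt_one hγ0 hγ1).of_nonneg_of_le
    (fun t => mul_nonneg (pow_nonneg hγ0 t) (hp t).1)
    (fun t => mul_le_of_le_one_right (pow_nonneg hγ0 t) (hp t).2)

lemma tsum_pow_mul_sum_pDist_mul (hP : ∀ s a, P s a ∈ stdSimplex ℝ S)
    (hμ : μ ∈ stdSimplex ℝ S) (hρ : ∀ s, ρ s ∈ stdSimplex ℝ A) (hγ0 : 0 ≤ γ) (hγ1 : γ < 1)
    (g : S → ℝ) :
    ∑' t, γ ^ t * ∑ s, pDist P μ ρ t s * g s =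
      (1 - γ)⁻¹ * ∑ s, dvisit P μ γ ρ s * g s := by
  have hγ : 1 - γ ≠ 0 := sub_ne_zero.mpr hγ1.ne'
  have hsum := fun s => (summable_pow_mul_pDist hP hμ hρ hγ0 hγ1 s).mul_right (g s)
  simp_rw [dvisit, mul_assoc, ← mul_sum, inv_mul_cancel_left₀ hγ, ← tsum_mul_right,
    ← Summable.tsum_finsetSum fun s _ => hsum s, mul_sum, mul_assoc]

theorem dvisit_eq_add_sum (hP : ∀ s a, P s a ∈ stdSimplex ℝ S) (hμ : μ ∈ stdSimplex ℝ S)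
    (hρ : ∀ s, ρ s ∈ stdSimplex ℝ A) (hγ0 : 0 ≤ γ) (hγ1 : γ < 1) (s' : S) :
    dvisit P μ γ ρ s' =
      (1 - γ) * μ s' + γ * ∑ s, dvisit P μ γ ρ s * ∑ a, ρ s a * P s a s' := by
  have hγ : 1 - γ ≠ 0 := sub_ne_zero.mpr hγ1.ne'
  have hstep : ∀ t, γ ^ (t + 1) * pDist P μ ρ (t + 1) s' =
      γ * (γ ^ t * ∑ s, pDist P μ ρ t s * ∑ a, ρ s a * P s a s') := fun t => by
    simp only [pDist, mul_sum, pow_succ]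
    exact sum_congr rfl fun s _ => sum_congr rfl fun a _ => by ring
  rw [dvisit, (summable_pow_mul_pDist hP hμ hρ hγ0 hγ1 s').tsum_eq_zero_add]
  simp_rw [hstep, tsum_mul_left, tsum_pow_mul_sum_pDist_mul hP hμ hρ hγ0 hγ1]
  field_simp
  simp [pDist]

theorem Jret_eq_sum_dvisit (hP : ∀ s a, P s a ∈ stdSimplex ℝ S) (hμ : μ ∈ stdSimplex ℝ S)
    (hρ : ∀ s, ρ s ∈ stdSimplex ℝ A) (hγ0 : 0 ≤ γ) (hγ1 : γ < 1) (R : S → A → ℝ) :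
    Jret P μ γ R ρ = (1 - γ)⁻¹ * ∑ s, dvisit P μ γ ρ s * ∑ a, ρ s a * R s a := by
  rw [← tsum_pow_mul_sum_pDist_mul hP hμ hρ hγ0 hγ1, Jret]
  simp_rw [mul_sum, mul_assoc]

lemma sum_mul_Adv {p : A → ℝ} (hp : ∑ a, p a = 1) (R : S → A → ℝ) (V : S → ℝ) (s : S) :
    ∑ a, p a * Adv P γ R V s a = ∑ a, p a * (R s a + γ * ∑ s', P s a s' * V s') - V s := by
  simp only [Adv, mul_sub, sum_sub_distrib, ← sum_mul, hp, one_mul]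

theorem inv_one_sub_mul_sum_dvisit_mul_Adv (hP : ∀ s a, P s a ∈ stdSimplex ℝ S)
    (hμ : μ ∈ stdSimplex ℝ S) (hρ : ∀ s, ρ s ∈ stdSimplex ℝ A) (hγ0 : 0 ≤ γ) (hγ1 : γ < 1)
    (R : S → A → ℝ) (V : S → ℝ) :
    (1 - γ)⁻¹ * ∑ s, dvisit P μ γ ρ s * ∑ a, ρ s a * Adv P γ R V s a =
      Jret P μ γ R ρ - ∑ s, μ s * V s := by
  have hγ : 1 - γ ≠ 0 := sub_ne_zero.mpr hγ1.ne'
  have hflow : ∑ s, dvisit P μ γ ρ s * (γ * ∑ a, ρ s a * ∑ s', P s a s' * V s') =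
      ∑ s', (dvisit P μ γ ρ s' - (1 - γ) * μ s') * V s' := by
    have hd : ∀ s', dvisit P μ γ ρ s' - (1 - γ) * μ s' =
        γ * ∑ s, dvisit P μ γ ρ s * ∑ a, ρ s a * P s a s' := fun s' => by
      rw [dvisit_eq_add_sum hP hμ hρ hγ0 hγ1 s', add_sub_cancel_left]
    simp_rw [hd, mul_sum, sum_mul]
    conv_rhs => rw [sum_comm]
    refine sum_congr rfl fun s _ => ?_
    conv_rhs => rw [sum_comm]
    exact sum_congr rfl fun a _ => sum_congr rfl fun s' _ => by ring
  have hsplit : ∀ s, ∑ a, ρ s a * Adv P γ R V s a =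
      ∑ a, ρ s a * R s a + γ * ∑ a, ρ s a * ∑ s', P s a s' * V s' - V s := fun s => by
    rw [sum_mul_Adv (hρ s).2, mul_sum, ← sum_add_distrib]
    simp_rw [mul_add, mul_left_comm γ]
  simp_rw [hsplit, mul_sub, mul_add, sum_sub_distrib, sum_add_distrib, hflow,
    Jret_eq_sum_dvisit hP hμ hρ hγ0 hγ1, sub_mul, sum_sub_distrib, mul_assoc, ← mul_sum]
  field_simp
  ring

theorem Jret_eq_sum_mul_of_bellman (hP : ∀ s a, P s a ∈ stdSimplex ℝ S)
    (hμ : μ ∈ stdSimplex ℝ S) (hρ : ∀ s, ρ s ∈ stdSimplex ℝ A) (hγ0 : 0 ≤ γ) (hγ1 : γ < 1)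
    {R : S → A → ℝ} {V : S → ℝ}
    (hV : ∀ s, V s = ∑ a, ρ s a * (R s a + γ * ∑ s', P s a s' * V s')) :
    Jret P μ γ R ρ = ∑ s, μ s * V s := by
  have h := inv_one_sub_mul_sum_dvisit_mul_Adv hP hμ hρ hγ0 hγ1 R V
  simp_rw [sum_mul_Adv (hρ _).2, ← hV, sub_self, mul_zero, sum_const_zero, mul_zero] at h
  linarith

end DiscountedMDP

lemma KL_eq_sum_mul_sub_log_div {X : Type*} [Fintype X] {p q b : X → ℝ}
    (hq : ∀ x, 0 < q x) (hb : ∀ x, 0 < b x) :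
    KL p q = ∑ x, p x * (Real.log (p x / b x) - Real.log (q x / b x)) := by
  refine sum_congr rfl fun x _ => ?_
  rcases eq_or_ne (p x) 0 with hp | hp
  · simp [hp]
  · rw [Real.log_div hp (hq x).ne', Real.log_div hp (hb x).ne',
      Real.log_div (hq x).ne' (hb x).ne']
    ring

theorem stmt_9_general {S A : Type*} [Fintype S] [Fintype A]
    (P : S → A → S → ℝ)
    (hP0 : ∀ s a s', 0 ≤ P s a s') (hP1 : ∀ s a, ∑ s', P s a s' = 1)
    (γ : ℝ) (hγ0 : 0 < γ) (hγ1 : γ < 1)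
    (μ : S → ℝ) (hμ0 : ∀ s, 0 ≤ μ s) (hμ1 : ∑ s, μ s = 1)
    (πb : S → A → ℝ) (hπb0 : ∀ s a, 0 < πb s a)
    (π πt : S → A → ℝ)
    (hπ0 : ∀ s a, 0 < π s a) (hπ1 : ∀ s, ∑ a, π s a = 1)
    (hπt0 : ∀ s a, 0 < πt s a) (hπt1 : ∀ s, ∑ a, πt s a = 1)
    (Vt : S → ℝ)
    (hVt : ∀ s, Vt s = ∑ a, πt s a *
      (Real.log (πt s a / πb s a) + γ * ∑ s', P s a s' * Vt s')) :
    Jret P μ γ (fun s a => Real.log (π s a / πb s a)) π -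
        Jret P μ γ (fun s a => Real.log (πt s a / πb s a)) πt =
      (1 - γ)⁻¹ * ∑ s, dvisit P μ γ π s *
          ∑ a, π s a * Adv P γ (fun s a => Real.log (πt s a / πb s a)) Vt s a +
        (1 - γ)⁻¹ * ∑ s, dvisit P μ γ π s * KL (π s) (πt s) := by
  have hP : ∀ s a, P s a ∈ stdSimplex ℝ S := fun s a => ⟨hP0 s a, hP1 s a⟩
  have hμ : μ ∈ stdSimplex ℝ S := ⟨hμ0, hμ1⟩
  have hπ : ∀ s, π s ∈ stdSimplex ℝ A := fun s => ⟨fun a => (hπ0 s a).le, hπ1 s⟩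
  have hπt : ∀ s, πt s ∈ stdSimplex ℝ A := fun s => ⟨fun a => (hπt0 s a).le, hπt1 s⟩
  have hJt := Jret_eq_sum_mul_of_bellman hP hμ hπt hγ0.le hγ1 hVt
  have hpdl := inv_one_sub_mul_sum_dvisit_mul_Adv hP hμ hπ hγ0.le hγ1
    (fun s a => Real.log (πt s a / πb s a)) Vt
  have hkl : Jret P μ γ (fun s a => Real.log (π s a / πb s a)) π -
      Jret P μ γ (fun s a => Real.log (πt s a / πb s a)) π =
        (1 - γ)⁻¹ * ∑ s, dvisit P μ γ π s * KL (π s) (πt s) := by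
    rw [Jret_eq_sum_dvisit hP hμ hπ hγ0.le hγ1, Jret_eq_sum_dvisit hP hμ hπ hγ0.le hγ1,
      ← mul_sub, ← sum_sub_distrib]
    refine congrArg _ (sum_congr rfl fun s _ => ?_)
    rw [KL_eq_sum_mul_sub_log_div (hπt0 s) (hπb0 s)]
    simp only [mul_sub, sum_sub_distrib]
  linarith

/-- **Performance difference lemma for policy-dependent reward.** With
`C_π(s,a) = log(π(s,a)/π_b(s,a))`, for any two everywhere-positive policies `π, π̃`:
`J_{C_π}(π) − J_{C_{π̃}}(π̃) = (1−γ)⁻¹ ∑_s d^π(s) ∑_a π(s,a) A^{π̃}_{C_{π̃}}(s,a)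
  + (1−γ)⁻¹ D^π_KL(π, π̃)`. -/
theorem stmt_9 {S A : Type*} [Fintype S] [Fintype A] [Nonempty S] [Nonempty A]
    (P : S → A → S → ℝ)
    (hP0 : ∀ s a s', 0 ≤ P s a s') (hP1 : ∀ s a, ∑ s', P s a s' = 1)
    (γ : ℝ) (hγ0 : 0 < γ) (hγ1 : γ < 1)
    (μ : S → ℝ) (hμ0 : ∀ s, 0 ≤ μ s) (hμ1 : ∑ s, μ s = 1)
    (πb : S → A → ℝ) (hπb0 : ∀ s a, 0 < πb s a) (hπb1 : ∀ s, ∑ a, πb s a = 1)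
    (π πt : S → A → ℝ)
    (hπ0 : ∀ s a, 0 < π s a) (hπ1 : ∀ s, ∑ a, π s a = 1)
    (hπt0 : ∀ s a, 0 < πt s a) (hπt1 : ∀ s, ∑ a, πt s a = 1)
    (Vt : S → ℝ)
    (hVt : ∀ s, Vt s = ∑ a, πt s a *
      (Real.log (πt s a / πb s a) + γ * ∑ s', P s a s' * Vt s')) :
    Jret P μ γ (fun s a => Real.log (π s a / πb s a)) π -
        Jret P μ γ (fun s a => Real.log (πt s a / πb s a)) πt =
      (1 - γ)⁻¹ * ∑ s, dvisit P μ γ π s *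
          ∑ a, π s a * Adv P γ (fun s a => Real.log (πt s a / πb s a)) Vt s a +
        (1 - γ)⁻¹ * ∑ s, dvisit P μ γ π s * KL (π s) (πt s) :=
  stmt_9_general P hP0 hP1 γ hγ0 hγ1 μ hμ0 hμ1 πb hπb0 π πt hπ0 hπ1 hπt0 hπt1 Vt hVt
end

section
/- (Distribution-shift bound for visitation expectations) For any two policies π and π̃ of the fixed finite discounted MDP with π(s,a) > 0 and π̃(s,a) > 0 for all (s,a), and any function g : S × A → ℝ, ∑_s d^π(s) ∑_a π(s,a) g(s,a) ≤ ∑_s d^{π̃}(s) ∑_a π(s,a) g(s,a) + √2 γ (1−γ)^{-1} (max_{s,a} |g(s,a)|) √(D^{π̃}_KL(π, π̃)). -/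
open Finset

/-!
The visitation distribution satisfies the flow equation `d^π = (1 - γ) μ + γ P_π^⊤ d^π`.
Subtracting the equations for `π` and `π̃` and taking `ℓ¹` norms,
`‖d^π - d^π̃‖₁ ≤ γ ‖d^π - d^π̃‖₁ + γ 𝔼_{s ∼ d^π̃} ‖π(s,·) - π̃(s,·)‖₁`,
so `‖d^π - d^π̃‖₁ ≤ γ (1 - γ)⁻¹ 𝔼_{d^π̃} ‖π - π̃‖₁`. Pinsker's inequality and Jensen's inequality
for `√` bound this expectation by `√2 √(D^π̃_KL(π, π̃))`, and the expectation of
`s ↦ ∑_a π(s,a) g(s,a)`, a function bounded by `max |g|`, moves by at most `max |g|` times the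
`ℓ¹` distance of the two visitation distributions.
-/

noncomputable def stepDist {S A : Type*} [Fintype S] [Fintype A]
    (P : S → A → S → ℝ) (π : S → A → ℝ) (x : S → ℝ) (s' : S) : ℝ :=
  ∑ s, ∑ a, x s * π s a * P s a s'

section Visitation

variable {S A : Type*} [Fintype S] [Fintype A] {P : S → A → S → ℝ} {π πt : S → A → ℝ}
  {μ x y : S → ℝ} {γ : ℝ}

lemma pDist_succ (t : ℕ) : pDist P μ π (t + 1) = stepDist P π (pDist P μ π t) := rfl

lemma stepDist_nonneg (hP0 : ∀ s a s', 0 ≤ P s a s') (hπ0 : ∀ s a, 0 ≤ π s a)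
    (hx : ∀ s, 0 ≤ x s) (s' : S) : 0 ≤ stepDist P π x s' :=
  sum_nonneg fun s _ => sum_nonneg fun a _ => mul_nonneg (mul_nonneg (hx s) (hπ0 s a)) (hP0 s a s')

lemma sum_stepDist (hP1 : ∀ s a, ∑ s', P s a s' = 1) (hπ1 : ∀ s, ∑ a, π s a = 1) :
    ∑ s', stepDist P π x s' = ∑ s, x s := by
  unfold stepDist
  rw [sum_comm]
  refine sum_congr rfl fun s _ => ?_
  rw [sum_comm]
  simp_rw [← mul_sum, hP1, mul_one, ← mul_sum, hπ1, mul_one]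

lemma stepDist_const_mul (c : ℝ) (s' : S) :
    stepDist P π (fun s => c * x s) s' = c * stepDist P π x s' := by
  simp_rw [stepDist, mul_sum, mul_assoc]

lemma sum_abs_stepDist_sub_le (hP0 : ∀ s a s', 0 ≤ P s a s') (hP1 : ∀ s a, ∑ s', P s a s' = 1)
    (hπ0 : ∀ s a, 0 ≤ π s a) (hπ1 : ∀ s, ∑ a, π s a = 1) (hy : ∀ s, 0 ≤ y s) :
    ∑ s', |stepDist P π x s' - stepDist P πt y s'| ≤
      ∑ s, |x s - y s| + ∑ s, y s * ∑ a, |π s a - πt s a| := by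
  calc ∑ s', |stepDist P π x s' - stepDist P πt y s'|
      ≤ ∑ s', ∑ s, ∑ a, |x s * π s a - y s * πt s a| * P s a s' := by
        gcongr with s'
        simp_rw [stepDist, ← sum_sub_distrib, ← sub_mul]
        refine (abs_sum_le_sum_abs _ _).trans (sum_le_sum fun s _ => ?_)
        refine (abs_sum_le_sum_abs _ _).trans_eq (sum_congr rfl fun a _ => ?_)
        rw [abs_mul, abs_of_nonneg (hP0 s a s')]
    _ = ∑ s, ∑ a, |x s * π s a - y s * πt s a| := by
        rw [sum_comm]
        refine sum_congr rfl fun s _ => ?_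
        rw [sum_comm]
        simp_rw [← mul_sum, hP1, mul_one]
    _ ≤ ∑ s, ∑ a, (|x s - y s| * π s a + y s * |π s a - πt s a|) := by
        gcongr with s _ a _
        calc |x s * π s a - y s * πt s a|
            = |(x s - y s) * π s a + y s * (π s a - πt s a)| := by congr 1; ring
          _ ≤ |(x s - y s) * π s a| + |y s * (π s a - πt s a)| := abs_add_le _ _
          _ = |x s - y s| * π s a + y s * |π s a - πt s a| := by
            rw [abs_mul, abs_mul, abs_of_nonneg (hπ0 s a), abs_of_nonneg (hy s)]
    _ = ∑ s, |x s - y s| + ∑ s, y s * ∑ a, |π s a - πt s a| := by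
        simp_rw [sum_add_distrib, ← mul_sum, hπ1, mul_one]

lemma pDist_nonneg (hP0 : ∀ s a s', 0 ≤ P s a s') (hμ0 : ∀ s, 0 ≤ μ s)
    (hπ0 : ∀ s a, 0 ≤ π s a) (t : ℕ) (s : S) : 0 ≤ pDist P μ π t s := by
  induction t generalizing s with
  | zero => exact hμ0 s
  | succ t ih => exact stepDist_nonneg hP0 hπ0 ih s

lemma sum_pDist (hP1 : ∀ s a, ∑ s', P s a s' = 1) (hμ1 : ∑ s, μ s = 1)
    (hπ1 : ∀ s, ∑ a, π s a = 1) (t : ℕ) : ∑ s, pDist P μ π t s = 1 := by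
  induction t with
  | zero => exact hμ1
  | succ t ih => rw [pDist_succ, sum_stepDist hP1 hπ1, ih]

lemma summable_pDist (hP0 : ∀ s a s', 0 ≤ P s a s') (hP1 : ∀ s a, ∑ s', P s a s' = 1)
    (hγ0 : 0 ≤ γ) (hγ1 : γ < 1) (hμ0 : ∀ s, 0 ≤ μ s) (hμ1 : ∑ s, μ s = 1)
    (hπ0 : ∀ s a, 0 ≤ π s a) (hπ1 : ∀ s, ∑ a, π s a = 1) (s : S) :
    Summable fun t => γ ^ t * pDist P μ π t s := by
  refine (summable_geometric_of_lt_one hγ0 hγ1).of_nonneg_of_le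
    (fun t => mul_nonneg (pow_nonneg hγ0 t) (pDist_nonneg hP0 hμ0 hπ0 t s)) fun t => ?_
  refine mul_le_of_le_one_right (pow_nonneg hγ0 t) ?_
  exact (single_le_sum (fun s _ => pDist_nonneg hP0 hμ0 hπ0 t s) (mem_univ s)).trans_eq
    (sum_pDist hP1 hμ1 hπ1 t)

lemma dvisit_nonneg (hP0 : ∀ s a s', 0 ≤ P s a s') (hγ0 : 0 ≤ γ) (hγ1 : γ < 1)
    (hμ0 : ∀ s, 0 ≤ μ s) (hπ0 : ∀ s a, 0 ≤ π s a) (s : S) : 0 ≤ dvisit P μ γ π s :=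
  mul_nonneg (sub_nonneg.2 hγ1.le)
    (tsum_nonneg fun t => mul_nonneg (pow_nonneg hγ0 t) (pDist_nonneg hP0 hμ0 hπ0 t s))

lemma dvisit_eq_add_stepDist (hP0 : ∀ s a s', 0 ≤ P s a s') (hP1 : ∀ s a, ∑ s', P s a s' = 1)
    (hγ0 : 0 ≤ γ) (hγ1 : γ < 1) (hμ0 : ∀ s, 0 ≤ μ s) (hμ1 : ∑ s, μ s = 1)
    (hπ0 : ∀ s a, 0 ≤ π s a) (hπ1 : ∀ s, ∑ a, π s a = 1) (s' : S) :
    dvisit P μ γ π s' = (1 - γ) * μ s' + γ * stepDist P π (dvisit P μ γ π) s' := by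
  have hsum := summable_pDist hP0 hP1 hγ0 hγ1 hμ0 hμ1 hπ0 hπ1
  have hshift : ∑' t, γ ^ (t + 1) * pDist P μ π (t + 1) s' =
      γ * stepDist P π (fun s => ∑' t, γ ^ t * pDist P μ π t s) s' := by
    have hterm : ∀ s a, Summable fun t => γ ^ t * pDist P μ π t s * π s a * P s a s' :=
      fun s a => ((hsum s).mul_right _).mul_right _
    calc ∑' t, γ ^ (t + 1) * pDist P μ π (t + 1) s'
        = ∑' t, γ * ∑ s, ∑ a, γ ^ t * pDist P μ π t s * π s a * P s a s' := by
          simp_rw [pDist_succ, stepDist, mul_sum, pow_succ, mul_assoc, mul_left_comm γ]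
      _ = γ * stepDist P π (fun s => ∑' t, γ ^ t * pDist P μ π t s) s' := by
          simp_rw [stepDist, ← tsum_mul_right]
          rw [tsum_mul_left, Summable.tsum_finsetSum fun s _ => summable_sum fun a _ => hterm s a]
          congr! 2 with s
          exact Summable.tsum_finsetSum fun a _ => hterm s a
  unfold dvisit
  rw [stepDist_const_mul, (hsum s').tsum_eq_zero_add, hshift]
  simp only [pow_zero, one_mul, pDist]
  ring

lemma sum_dvisit (hP0 : ∀ s a s', 0 ≤ P s a s') (hP1 : ∀ s a, ∑ s', P s a s' = 1)
    (hγ0 : 0 ≤ γ) (hγ1 : γ < 1) (hμ0 : ∀ s, 0 ≤ μ s) (hμ1 : ∑ s, μ s = 1)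
    (hπ0 : ∀ s a, 0 ≤ π s a) (hπ1 : ∀ s, ∑ a, π s a = 1) : ∑ s, dvisit P μ γ π s = 1 := by
  have hflow : ∑ s, dvisit P μ γ π s = (1 - γ) + γ * ∑ s, dvisit P μ γ π s :=
    calc ∑ s, dvisit P μ γ π s
        = ∑ s, ((1 - γ) * μ s + γ * stepDist P π (dvisit P μ γ π) s) :=
          sum_congr rfl fun s _ => dvisit_eq_add_stepDist hP0 hP1 hγ0 hγ1 hμ0 hμ1 hπ0 hπ1 s
      _ = (1 - γ) + γ * ∑ s, dvisit P μ γ π s := by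
          rw [sum_add_distrib, ← mul_sum, ← mul_sum, hμ1, sum_stepDist hP1 hπ1, mul_one]
  nlinarith

lemma sum_abs_dvisit_sub_le (hP0 : ∀ s a s', 0 ≤ P s a s') (hP1 : ∀ s a, ∑ s', P s a s' = 1)
    (hγ0 : 0 ≤ γ) (hγ1 : γ < 1) (hμ0 : ∀ s, 0 ≤ μ s) (hμ1 : ∑ s, μ s = 1)
    (hπ0 : ∀ s a, 0 ≤ π s a) (hπ1 : ∀ s, ∑ a, π s a = 1)
    (hπt0 : ∀ s a, 0 ≤ πt s a) (hπt1 : ∀ s, ∑ a, πt s a = 1) :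
    ∑ s, |dvisit P μ γ π s - dvisit P μ γ πt s| ≤
      γ * (1 - γ)⁻¹ * ∑ s, dvisit P μ γ πt s * ∑ a, |π s a - πt s a| := by
  have hflow := dvisit_eq_add_stepDist hP0 hP1 hγ0 hγ1 hμ0 hμ1 hπ0 hπ1
  have hflowt := dvisit_eq_add_stepDist hP0 hP1 hγ0 hγ1 hμ0 hμ1 hπt0 hπt1
  have hstep := sum_abs_stepDist_sub_le (x := dvisit P μ γ π) (πt := πt) hP0 hP1 hπ0 hπ1
    (dvisit_nonneg hP0 hγ0 hγ1 hμ0 hπt0)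
  set d := dvisit P μ γ π
  set dt := dvisit P μ γ πt
  set ε := ∑ s, dt s * ∑ a, |π s a - πt s a|
  have hsub : ∑ s, |d s - dt s| =
      γ * ∑ s, |stepDist P π d s - stepDist P πt dt s| := by
    simp_rw [hflow, hflowt, add_sub_add_left_eq_sub, ← mul_sub, abs_mul, abs_of_nonneg hγ0,
      ← mul_sum]
  have hcontract : (1 - γ) * ∑ s, |d s - dt s| ≤ γ * ε := by
    nlinarith [mul_le_mul_of_nonneg_left hstep hγ0]
  calc ∑ s, |d s - dt s| = (1 - γ)⁻¹ * ((1 - γ) * ∑ s, |d s - dt s|) := by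
        field_simp [(sub_pos.2 hγ1).ne']
    _ ≤ (1 - γ)⁻¹ * (γ * ε) := by gcongr
    _ = γ * (1 - γ)⁻¹ * ε := by ring

end Visitation

lemma sum_mul_sub_sum_mul_le {ι : Type*} [Fintype ι] {x y f : ι → ℝ} {M : ℝ}
    (hf : ∀ i, |f i| ≤ M) : ∑ i, x i * f i - ∑ i, y i * f i ≤ M * ∑ i, |x i - y i| := by
  rw [← sum_sub_distrib, mul_sum]
  gcongr with i
  calc x i * f i - y i * f i ≤ |x i - y i| * |f i| := by
        rw [← sub_mul, ← abs_mul]; exact le_abs_self _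
    _ ≤ M * |x i - y i| := by rw [mul_comm]; gcongr; exact hf i

lemma abs_sum_mul_le_of_abs_le {ι : Type*} [Fintype ι] {w f : ι → ℝ} {M : ℝ}
    (hw0 : ∀ i, 0 ≤ w i) (hw1 : ∑ i, w i = 1) (hf : ∀ i, |f i| ≤ M) : |∑ i, w i * f i| ≤ M :=
  calc |∑ i, w i * f i| ≤ ∑ i, w i * |f i| :=
        (abs_sum_le_sum_abs _ _).trans_eq (sum_congr rfl fun i _ => by
          rw [abs_mul, abs_of_nonneg (hw0 i)])
    _ ≤ ∑ i, w i * M := by gcongr with i; exacts [hw0 i, hf i]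
    _ = M := by rw [← sum_mul, hw1, one_mul]

section Pinsker

open Real

lemma mul_log_sum_div_sum_le {ι : Type*} (B : Finset ι) {p q : ι → ℝ}
    (hp : ∀ i ∈ B, 0 < p i) (hq : ∀ i ∈ B, 0 < q i) :
    (∑ i ∈ B, p i) * log ((∑ i ∈ B, p i) / ∑ i ∈ B, q i) ≤ ∑ i ∈ B, p i * log (p i / q i) := by
  rcases B.eq_empty_or_nonempty with rfl | hB
  · simp
  set Q := ∑ i ∈ B, q i
  have hQ : 0 < Q := sum_pos hq hB
  have hw : ∑ i ∈ B, q i / Q = 1 := by rw [← sum_div, div_self hQ.ne']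
  have hJ := convexOn_mul_log.map_sum_le (t := B) (w := fun i => q i / Q)
    (p := fun i => p i / q i) (fun i hi => (div_pos (hq i hi) hQ).le) hw
    (fun i hi => Set.mem_Ici.2 (div_pos (hp i hi) (hq i hi)).le)
  have hmean : ∑ i ∈ B, q i / Q * (p i / q i) = (∑ i ∈ B, p i) / Q := by
    rw [sum_div]
    exact sum_congr rfl fun i hi => by field_simp [(hq i hi).ne']
  have hrhs : ∑ i ∈ B, q i / Q * (p i / q i * log (p i / q i)) =
      (∑ i ∈ B, p i * log (p i / q i)) / Q := by
    rw [sum_div]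
    exact sum_congr rfl fun i hi => by field_simp [(hq i hi).ne']
  simp only [smul_eq_mul, hmean, hrhs] at hJ
  rwa [div_mul_eq_mul_div, div_le_div_iff_of_pos_right hQ] at hJ

lemma KL_nonneg {X : Type*} [Fintype X] {p q : X → ℝ} (hp : ∀ x, 0 < p x) (hq : ∀ x, 0 < q x)
    (hp1 : ∑ x, p x = 1) (hq1 : ∑ x, q x = 1) : 0 ≤ KL p q := by
  simpa [hp1, hq1, KL] using mul_log_sum_div_sum_le univ (fun x _ => hp x) fun x _ => hq x

lemma le_of_hasDerivAt_of_mul_nonneg {f f' : ℝ → ℝ} {s : Set ℝ} (hs : s.OrdConnected)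
    {c x : ℝ} (hc : c ∈ s) (hx : x ∈ s) (hf : ∀ y ∈ s, HasDerivAt f (f' y) y)
    (hf' : ∀ y ∈ s, 0 ≤ (y - c) * f' y) : f c ≤ f x := by
  have hcont : ∀ a b, a ∈ s → b ∈ s → ContinuousOn f (Set.Icc a b) := fun a b ha hb y hy =>
    (hf y (hs.out ha hb hy)).continuousAt.continuousWithinAt
  have hderiv : ∀ a b, a ∈ s → b ∈ s →
      ∀ y ∈ interior (Set.Icc a b), HasDerivWithinAt f (f' y) (interior (Set.Icc a b)) y :=
    fun a b ha hb y hy => (hf y (hs.out ha hb (interior_subset hy))).hasDerivWithinAt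
  rcases le_total x c with hxc | hcx
  · refine antitoneOn_of_hasDerivWithinAt_nonpos (convex_Icc x c) (hcont x c hx hc)
      (hderiv x c hx hc) (fun y hy => ?_) ⟨le_rfl, hxc⟩ ⟨hxc, le_rfl⟩ hxc
    rw [interior_Icc] at hy
    exact nonpos_of_mul_nonneg_right (hf' y (hs.out hx hc (Set.Ioo_subset_Icc_self hy)))
      (sub_neg.2 hy.2)
  · refine monotoneOn_of_hasDerivWithinAt_nonneg (convex_Icc c x) (hcont c x hc hx)
      (hderiv c x hc hx) (fun y hy => ?_) ⟨le_rfl, hcx⟩ ⟨hcx, le_rfl⟩ hcx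
    rw [interior_Icc] at hy
    exact nonneg_of_mul_nonneg_right (hf' y (hs.out hc hx (Set.Ioo_subset_Icc_self hy)))
      (sub_pos.2 hy.1)

lemma two_mul_sq_sub_le_binary_KL {α β : ℝ} (hα : α ∈ Set.Ioo 0 1) (hβ : β ∈ Set.Ioo 0 1) :
    2 * (α - β) ^ 2 ≤ α * log (α / β) + (1 - α) * log ((1 - α) / (1 - β)) := by
  set h : ℝ → ℝ := fun x => -α * log x - (1 - α) * log (1 - x) - 2 * (α - x) ^ 2
  have hderiv : ∀ y ∈ Set.Ioo (0 : ℝ) 1,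
      HasDerivAt h ((y - α) * (1 - 2 * y) ^ 2 / (y * (1 - y))) y := by
    rintro y ⟨hy0, hy1⟩
    have hd : HasDerivAt h
        (-α * y⁻¹ - (1 - α) * ((1 - y)⁻¹ * -1) - 2 * (2 * (α - y) ^ 1 * -1)) y :=
      (((hasDerivAt_log hy0.ne').const_mul (-α)).sub
        (((hasDerivAt_log (sub_pos.2 hy1).ne').comp y
          ((hasDerivAt_id y).const_sub 1)).const_mul (1 - α))).sub
        ((((hasDerivAt_id y).const_sub α).pow 2).const_mul 2)
    refine hd.congr_deriv ?_
    field_simp [hy0.ne', (sub_pos.2 hy1).ne']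
    ring
  have hmin := le_of_hasDerivAt_of_mul_nonneg Set.ordConnected_Ioo hα hβ hderiv
    fun y ⟨hy0, hy1⟩ => by
      rw [← mul_div_assoc, ← mul_assoc, ← sq]
      exact div_nonneg (by positivity) (mul_pos hy0 (sub_pos.2 hy1)).le
  rw [log_div hα.1.ne' hβ.1.ne', log_div (sub_pos.2 hα.2).ne' (sub_pos.2 hβ.2).ne']
  simp only [h, sub_self] at hmin
  nlinarith

/-- Pinsker's inequality: coarse-graining to the two-point distributions of the event `{q < p}`
preserves `‖p - q‖₁` and, by the log-sum inequality, does not increase `KL p q`. -/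
lemma sum_abs_sub_le_sqrt_two_mul_KL {X : Type*} [Fintype X] {p q : X → ℝ}
    (hp : ∀ x, 0 < p x) (hq : ∀ x, 0 < q x) (hp1 : ∑ x, p x = 1) (hq1 : ∑ x, q x = 1) :
    ∑ x, |p x - q x| ≤ √(2 * KL p q) := by
  classical
  set B := univ.filter fun x => q x < p x
  set α := ∑ x ∈ B, p x
  set β := ∑ x ∈ B, q x
  have hpc : ∑ x ∈ Bᶜ, p x = 1 - α := by rw [← hp1, ← sum_add_sum_compl B p]; ring
  have hqc : ∑ x ∈ Bᶜ, q x = 1 - β := by rw [← hq1, ← sum_add_sum_compl B q]; ring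
  have hL1 : ∑ x, |p x - q x| = 2 * (α - β) := by
    have hB : ∑ x ∈ B, |p x - q x| = α - β := by
      rw [← sum_sub_distrib]
      exact sum_congr rfl fun x hx => abs_of_pos (sub_pos.2 (mem_filter.1 hx).2)
    have hBc : ∑ x ∈ Bᶜ, |p x - q x| = (1 - β) - (1 - α) := by
      rw [← hpc, ← hqc, ← sum_sub_distrib]
      refine sum_congr rfl fun x hx => ?_
      have hpq : p x ≤ q x := not_lt.1 fun h => mem_compl.1 hx (mem_filter.2 ⟨mem_univ x, h⟩)
      rw [abs_sub_comm, abs_of_nonneg (sub_nonneg.2 hpq)]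
    rw [← sum_add_sum_compl B, hB, hBc]
    ring
  rcases B.eq_empty_or_nonempty with hB | hB
  · simp [hL1, α, β, hB]
  rcases Bᶜ.eq_empty_or_nonempty with hBc | hBc
  · rw [hBc, sum_empty] at hpc hqc
    rw [hL1, show α - β = 0 by linarith]
    simp
  have hα : α ∈ Set.Ioo 0 1 :=
    ⟨sum_pos (fun x _ => hp x) hB, sub_pos.1 (hpc ▸ sum_pos (fun x _ => hp x) hBc)⟩
  have hβ : β ∈ Set.Ioo 0 1 :=
    ⟨sum_pos (fun x _ => hq x) hB, sub_pos.1 (hqc ▸ sum_pos (fun x _ => hq x) hBc)⟩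
  have hKL : α * log (α / β) + (1 - α) * log ((1 - α) / (1 - β)) ≤ KL p q := by
    have hlogB := mul_log_sum_div_sum_le B (fun x _ => hp x) fun x _ => hq x
    have hlogBc := mul_log_sum_div_sum_le Bᶜ (fun x _ => hp x) fun x _ => hq x
    rw [hpc, hqc] at hlogBc
    rw [KL, ← sum_add_sum_compl B]
    exact add_le_add hlogB hlogBc
  rw [hL1, ← sqrt_sq (hL1 ▸ sum_nonneg fun x _ => abs_nonneg _ : 0 ≤ 2 * (α - β))]
  gcongr
  nlinarith [two_mul_sq_sub_le_binary_KL hα hβ]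

lemma sum_mul_sqrt_le_sqrt_sum_mul {ι : Type*} [Fintype ι] {w v : ι → ℝ} (hw0 : ∀ i, 0 ≤ w i)
    (hw1 : ∑ i, w i = 1) (hv : ∀ i, 0 ≤ v i) : ∑ i, w i * √(v i) ≤ √(∑ i, w i * v i) :=
  strictConcaveOn_sqrt.concaveOn.le_map_sum (fun i _ => hw0 i) hw1 fun i _ => hv i

lemma sum_mul_sum_abs_sub_le_sqrt_two_mul_sqrt {ι X : Type*} [Fintype ι] [Fintype X]
    {w : ι → ℝ} {p q : ι → X → ℝ} (hw0 : ∀ i, 0 ≤ w i) (hw1 : ∑ i, w i = 1)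
    (hp : ∀ i x, 0 < p i x) (hq : ∀ i x, 0 < q i x)
    (hp1 : ∀ i, ∑ x, p i x = 1) (hq1 : ∀ i, ∑ x, q i x = 1) :
    ∑ i, w i * ∑ x, |p i x - q i x| ≤ √2 * √(∑ i, w i * KL (p i) (q i)) :=
  calc ∑ i, w i * ∑ x, |p i x - q i x| ≤ ∑ i, w i * √(2 * KL (p i) (q i)) := by
        gcongr with i
        exacts [hw0 i, sum_abs_sub_le_sqrt_two_mul_KL (hp i) (hq i) (hp1 i) (hq1 i)]
    _ = √2 * ∑ i, w i * √(KL (p i) (q i)) := by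
        simp_rw [sqrt_mul zero_le_two, mul_sum, mul_left_comm]
    _ ≤ √2 * √(∑ i, w i * KL (p i) (q i)) := by
        gcongr
        exact sum_mul_sqrt_le_sqrt_sum_mul hw0 hw1 fun i =>
          KL_nonneg (hp i) (hq i) (hp1 i) (hq1 i)

end Pinsker

theorem stmt_13_general {S A : Type*} [Fintype S] [Fintype A]
    (P : S → A → S → ℝ)
    (hP0 : ∀ s a s', 0 ≤ P s a s') (hP1 : ∀ s a, ∑ s', P s a s' = 1)
    (γ : ℝ) (hγ0 : 0 < γ) (hγ1 : γ < 1)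
    (μ : S → ℝ) (hμ0 : ∀ s, 0 ≤ μ s) (hμ1 : ∑ s, μ s = 1)
    (π πt : S → A → ℝ)
    (hπ0 : ∀ s a, 0 < π s a) (hπ1 : ∀ s, ∑ a, π s a = 1)
    (hπt0 : ∀ s a, 0 < πt s a) (hπt1 : ∀ s, ∑ a, πt s a = 1)
    (g : S → A → ℝ) :
    ∑ s, dvisit P μ γ π s * ∑ a, π s a * g s a ≤
      (∑ s, dvisit P μ γ πt s * ∑ a, π s a * g s a) +
        Real.sqrt 2 * γ * (1 - γ)⁻¹ * (⨆ s, ⨆ a, |g s a|) *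
          Real.sqrt (∑ s, dvisit P μ γ πt s * KL (π s) (πt s)) := by
  have hπ0' s a := (hπ0 s a).le
  have hπt0' s a := (hπt0 s a).le
  set M := ⨆ s, ⨆ a, |g s a|
  have hM0 : 0 ≤ M := Real.iSup_nonneg fun s => Real.iSup_nonneg fun a => abs_nonneg _
  have hgM s a : |g s a| ≤ M :=
    (le_ciSup (Finite.bddAbove_range fun a => |g s a|) a).trans
      (le_ciSup (Finite.bddAbove_range fun s => ⨆ a, |g s a|) s)
  have hshift := sum_abs_dvisit_sub_le hP0 hP1 hγ0.le hγ1 hμ0 hμ1 hπ0' hπ1 hπt0' hπt1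
  have hpinsker := sum_mul_sum_abs_sub_le_sqrt_two_mul_sqrt
    (dvisit_nonneg hP0 hγ0.le hγ1 hμ0 hπt0') (sum_dvisit hP0 hP1 hγ0.le hγ1 hμ0 hμ1 hπt0' hπt1)
    hπ0 hπt0 hπ1 hπt1
  set f := fun s => ∑ a, π s a * g s a
  have hfM s : |f s| ≤ M := abs_sum_mul_le_of_abs_le (hπ0' s) (hπ1 s) (hgM s)
  calc ∑ s, dvisit P μ γ π s * f s
      = ∑ s, dvisit P μ γ πt s * f s +
          (∑ s, dvisit P μ γ π s * f s - ∑ s, dvisit P μ γ πt s * f s) := by ring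
    _ ≤ ∑ s, dvisit P μ γ πt s * f s +
          M * ∑ s, |dvisit P μ γ π s - dvisit P μ γ πt s| := by
        gcongr; exact sum_mul_sub_sum_mul_le hfM
    _ ≤ ∑ s, dvisit P μ γ πt s * f s + M * (γ * (1 - γ)⁻¹ *
          (√2 * √(∑ s, dvisit P μ γ πt s * KL (π s) (πt s)))) := by
        have hcoef : 0 ≤ γ * (1 - γ)⁻¹ := mul_nonneg hγ0.le (inv_nonneg.2 (sub_nonneg.2 hγ1.le))
        gcongr
        exact hshift.trans (by gcongr)
    _ = _ := by ring

/-- **Distribution-shift bound for visitation expectations.** For any two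
everywhere-positive policies `π, π̃` and any `g : S × A → ℝ`,
`∑_s d^π(s) ∑_a π(s,a) g(s,a) ≤ ∑_s d^{π̃}(s) ∑_a π(s,a) g(s,a)
  + √2 γ (1−γ)⁻¹ (max_{s,a} |g(s,a)|) √(D^{π̃}_KL(π, π̃))`. -/
theorem stmt_13 {S A : Type*} [Fintype S] [Fintype A] [Nonempty S] [Nonempty A]
    (P : S → A → S → ℝ)
    (hP0 : ∀ s a s', 0 ≤ P s a s') (hP1 : ∀ s a, ∑ s', P s a s' = 1)
    (γ : ℝ) (hγ0 : 0 < γ) (hγ1 : γ < 1)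
    (μ : S → ℝ) (hμ0 : ∀ s, 0 ≤ μ s) (hμ1 : ∑ s, μ s = 1)
    (π πt : S → A → ℝ)
    (hπ0 : ∀ s a, 0 < π s a) (hπ1 : ∀ s, ∑ a, π s a = 1)
    (hπt0 : ∀ s a, 0 < πt s a) (hπt1 : ∀ s, ∑ a, πt s a = 1)
    (g : S → A → ℝ) :
    ∑ s, dvisit P μ γ π s * ∑ a, π s a * g s a ≤
      (∑ s, dvisit P μ γ πt s * ∑ a, π s a * g s a) +
        Real.sqrt 2 * γ * (1 - γ)⁻¹ * (⨆ s, ⨆ a, |g s a|) *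
          Real.sqrt (∑ s, dvisit P μ γ πt s * KL (π s) (πt s)) :=
  stmt_13_general P hP0 hP1 γ hγ0 hγ1 μ hμ0 hμ1 π πt hπ0 hπ1 hπt0 hπt1 g
end
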